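/- arXiv:1508.06395 — 4 statements merged into one kernel-verified Lean document; each statement's English description precedes it below -/
import Mathlib

section
/- Let ρ be a bipartite distribution on U × V and σ a bipartite distribution on X × Y, and let p be a real number with Cor(σ) < p < 1. Then agr_{ρ⊗σ}(p) ≥ agr_ρ(p − Cor(σ)). -/
open scoped BigOperators ENNReal

namespace SR

variable {U V X Y : Type*}

/-- `μ` is a probability distribution on a finite type. -/
def IsDist {α : Type*} [Fintype α] (μ : α → ℝ) : Prop :=
  (∀ a, 0 ≤ μ a) ∧ ∑ a, μ a = 1

/-- Expectation of `f` under `μ`. -/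
def expect {α : Type*} [Fintype α] (μ : α → ℝ) (f : α → ℝ) : ℝ :=
  ∑ a, μ a * f a

/-- First (`U`-)marginal of a bipartite distribution. -/
def margFst [Fintype V] (ρ : U × V → ℝ) : U → ℝ :=
  fun u => ∑ v, ρ (u, v)

/-- Second (`V`-)marginal of a bipartite distribution. -/
def margSnd [Fintype U] (ρ : U × V → ℝ) : V → ℝ :=
  fun v => ∑ u, ρ (u, v)

/-- Maximum correlation of a bipartite distribution (sSup of the empty set is 0). -/
noncomputable def cor [Fintype U] [Fintype V] (ρ : U × V → ℝ) : ℝ :=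
  sSup { t : ℝ | ∃ (f : U → ℝ) (g : V → ℝ),
      expect (margFst ρ) f = 0 ∧ expect (margSnd ρ) g = 0 ∧
      expect (margFst ρ) (fun u => f u ^ 2) = 1 ∧
      expect (margSnd ρ) (fun v => g v ^ 2) = 1 ∧
      t = ∑ x : U × V, ρ x * (f x.1 * g x.2) }

/-- Tensor product of two bipartite distributions. -/
def tensor (ρ : U × V → ℝ) (σ : X × Y → ℝ) : (U × X) × (V × Y) → ℝ :=
  fun p => ρ (p.1.1, p.2.1) * σ (p.1.2, p.2.2)

/-- Tensor product of a family of bipartite distributions. -/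
def tensorPi {n : ℕ} {U V : Fin n → Type*} (ρ : ∀ i, U i × V i → ℝ) :
    (∀ i, U i) × (∀ i, V i) → ℝ :=
  fun p => ∏ i, ρ i (p.1 i, p.2 i)

/-- The distribution of `ℓ` i.i.d. samples from a bipartite distribution `ρ`. -/
def iid (ρ : U × V → ℝ) (ℓ : ℕ) : (Fin ℓ → U) × (Fin ℓ → V) → ℝ :=
  fun p => ∏ i, ρ (p.1 i, p.2 i)

/-- Agreement complexity of `ρ` at success probability `p`. -/
noncomputable def agr [Fintype U] [Fintype V] (ρ : U × V → ℝ) (p : ℝ) : ℝ :=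
  sInf { c : ℝ | ∃ (ℓ : ℕ) (f : (Fin ℓ → U) → ℝ) (g : (Fin ℓ → V) → ℝ),
      (∀ x, f x ∈ Set.Icc (0:ℝ) 1) ∧ (∀ y, g y ∈ Set.Icc (0:ℝ) 1) ∧
      p ≤ (∑ x : (Fin ℓ → U) × (Fin ℓ → V), iid ρ ℓ x * (f x.1 * g x.2)) ∧
      c = (∑ x : (Fin ℓ → U) × (Fin ℓ → V), iid ρ ℓ x * f x.1)
        + (∑ x : (Fin ℓ → U) × (Fin ℓ → V), iid ρ ℓ x * g x.2) }

/-- There is a `p`-collision protocol for `ρ` with domain size `n` and output size at most `k`.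
    The players may use private randomness (uniform over `Fin sA`, `Fin sB` weighted by
    distributions `μA`, `μB`, independent of everything else). -/
def ColLE [Fintype U] [Fintype V] (ρ : U × V → ℝ) (n : ℕ) (p : ℝ) (k : ℕ) : Prop :=
  ∃ (ℓ sA sB : ℕ) (μA : Fin sA → ℝ) (μB : Fin sB → ℝ)
    (A : (Fin ℓ → U) → Fin sA → Finset (Fin n))
    (B : (Fin ℓ → V) → Fin sB → Finset (Fin n)),
    IsDist μA ∧ IsDist μB ∧
    (∀ i : Fin n, p ≤ ∑ x : (Fin ℓ → U) × (Fin ℓ → V), ∑ rA, ∑ rB,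
        iid ρ ℓ x * (μA rA * μB rB) *
          (if i ∈ A x.1 rA ∧ i ∈ B x.2 rB then (1:ℝ) else 0)) ∧
    (∀ (x : (Fin ℓ → U) × (Fin ℓ → V)) (rA : Fin sA),
        0 < iid ρ ℓ x → 0 < μA rA → (A x.1 rA).card ≤ k) ∧
    (∀ (x : (Fin ℓ → U) × (Fin ℓ → V)) (rB : Fin sB),
        0 < iid ρ ℓ x → 0 < μB rB → (B x.2 rB).card ≤ k)

/-- Collision complexity `col_ρ(n, p)`, valued in `ℕ∞` (`sInf ∅ = ⊤`). -/
noncomputable def col [Fintype U] [Fintype V] (ρ : U × V → ℝ) (n : ℕ) (p : ℝ) : ℕ∞ :=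
  sInf { k : ℕ∞ | ∃ m : ℕ, k = (m : ℕ∞) ∧ ColLE ρ n p m }

/-- Base-2 Shannon entropy of a finitely supported distribution. -/
noncomputable def ent2 {α : Type*} [Fintype α] (μ : α → ℝ) : ℝ :=
  ∑ a, -(μ a * Real.logb 2 (μ a))

open Classical in
/-- Probability of an event under `μ`. -/
noncomputable def prEvent {Ω : Type*} [Fintype Ω] (μ : Ω → ℝ) (P : Ω → Prop) : ℝ :=
  ∑ ω, if P ω then μ ω else 0

/-- The distribution of a random variable `Z` conditioned on an event `P`. -/
noncomputable def condDist {Ω α : Type*} [Fintype Ω] (μ : Ω → ℝ) (Z : Ω → α)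
    (P : Ω → Prop) : α → ℝ :=
  fun a => prEvent μ (fun ω => Z ω = a ∧ P ω) / prEvent μ P

/-- The `L^r(μ)`-norm of a complex-valued function on a finite probability space. -/
noncomputable def lnorm {α : Type*} [Fintype α] (μ : α → ℝ) (r : ℝ) (h : α → ℂ) : ℝ :=
  (∑ a, μ a * ‖h a‖ ^ r) ^ (1 / r)

/-- The conditional-expectation operator `T_ρ` of a bipartite distribution. -/
noncomputable def condOp [Fintype U] [Fintype V] (ρ : U × V → ℝ) (f : U → ℂ) : V → ℂ :=
  fun v => ∑ u, ((ρ (u, v) / margSnd ρ v : ℝ) : ℂ) * f u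

/-- `ρ` is `q`-to-`p` hypercontractive. -/
def Hyper [Fintype U] [Fintype V] (ρ : U × V → ℝ) (q p : ℝ) : Prop :=
  ∀ f : U → ℂ, lnorm (margSnd ρ) q (condOp ρ f) ≤ lnorm (margFst ρ) p f

/-- Inner product over 𝔽₂. -/
def ipF2 {m : ℕ} (u v : Fin m → ZMod 2) : ZMod 2 := ∑ i, u i * v i

/-- `σ_{m,b}`: uniform distribution on pairs `(u,v) ∈ 𝔽₂^m × 𝔽₂^m` with `u·v = b`. -/
noncomputable def sigmaIP (m : ℕ) (b : ZMod 2) :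
    ((Fin m → ZMod 2) × (Fin m → ZMod 2)) → ℝ :=
  fun p => if ipF2 p.1 p.2 = b then
      (((Finset.univ.filter
        (fun q : (Fin m → ZMod 2) × (Fin m → ZMod 2) => ipF2 q.1 q.2 = b)).card : ℝ))⁻¹
    else 0

/-- `ρ_disj`: uniform distribution on `{(0,0),(0,1),(1,0)} ⊆ {0,1} × {0,1}`
    (with `false = 0`, `true = 1`). -/
noncomputable def rhoDisj : Bool × Bool → ℝ :=
  fun x => if x = (true, true) then 0 else 1/3

/-!
Averaging a protocol for `ρ ⊗ σ` over the `σ`-coordinates gives a protocol for `ρ` of the same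
length and cost. For fixed `ρ`-inputs, the success probability of the original protocol exceeds
the product of the two averaged strategies by a covariance, under `σ^⊗ℓ`, between a `[0,1]`-valued
function of Alice's input and one of Bob's. Maximal correlation tensorizes (law of total covariance
plus Cauchy–Schwarz), so this covariance is at most `Cor(σ)`.
-/

section Expect
variable {α β : Type*} [Fintype α] [Fintype β] {μ : α → ℝ}

lemma expect_sub (μ : α → ℝ) (f g : α → ℝ) :
    expect μ (fun a => f a - g a) = expect μ f - expect μ g := by
  simp only [expect, mul_sub, Finset.sum_sub_distrib]

lemma expect_mul_const (μ : α → ℝ) (f : α → ℝ) (c : ℝ) :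
    expect μ (fun a => f a * c) = expect μ f * c := by
  simp only [expect, ← mul_assoc, Finset.sum_mul]

lemma expect_const_mul (μ : α → ℝ) (f : α → ℝ) (c : ℝ) :
    expect μ (fun a => c * f a) = c * expect μ f := by
  simp only [mul_comm c, expect_mul_const]

lemma expect_const (hμ : IsDist μ) (c : ℝ) : expect μ (fun _ => c) = c := by
  simp only [expect, ← Finset.sum_mul, hμ.2, one_mul]

lemma expect_add_const (hμ : IsDist μ) (f : α → ℝ) (c : ℝ) :
    expect μ (fun a => f a + c) = expect μ f + c := by
  simp only [expect, mul_add, Finset.sum_add_distrib, ← Finset.sum_mul, hμ.2, one_mul]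

lemma expect_mono (hμ : 0 ≤ μ) {f g : α → ℝ} (h : ∀ a, f a ≤ g a) :
    expect μ f ≤ expect μ g :=
  Finset.sum_le_sum fun a _ => mul_le_mul_of_nonneg_left (h a) (hμ a)

lemma expect_nonneg (hμ : 0 ≤ μ) {f : α → ℝ} (hf : ∀ a, 0 ≤ f a) : 0 ≤ expect μ f :=
  Finset.sum_nonneg fun a _ => mul_nonneg (hμ a) (hf a)

lemma expect_mem_Icc (hμ : IsDist μ) {f : α → ℝ} (hf : ∀ a, f a ∈ Set.Icc (0 : ℝ) 1) :
    expect μ f ∈ Set.Icc (0 : ℝ) 1 :=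
  ⟨expect_const hμ 0 ▸ expect_mono hμ.1 fun a => (hf a).1,
    expect_const hμ 1 ▸ expect_mono hμ.1 fun a => (hf a).2⟩

lemma expect_comp_equiv (μ : α → ℝ) (e : β ≃ α) (f : β → ℝ) :
    expect (μ ∘ e) f = expect μ (f ∘ e.symm) :=
  Fintype.sum_equiv e _ _ fun b => by simp

lemma IsDist.comp_equiv (hμ : IsDist μ) (e : β ≃ α) : IsDist (μ ∘ e) :=
  ⟨fun b => hμ.1 (e b), (Fintype.sum_equiv e _ _ fun _ => rfl).trans hμ.2⟩

lemma expect_mul_le_sqrt (hμ : 0 ≤ μ) (f g : α → ℝ) :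
    expect μ (fun a => f a * g a) ≤
      √(expect μ (fun a => f a ^ 2)) * √(expect μ (fun a => g a ^ 2)) := by
  have key := Real.sum_mul_le_sqrt_mul_sqrt Finset.univ (fun a => √(μ a) * f a)
    (fun a => √(μ a) * g a)
  simp only [mul_pow, Real.sq_sqrt (hμ _)] at key
  unfold expect
  convert key using 2 with a
  rw [mul_mul_mul_comm, Real.mul_self_sqrt (hμ a)]

end Expect

section Covariance
variable {α β : Type*} [Fintype α] [Fintype β] {μ : α → ℝ}

def cov (μ : α → ℝ) (f g : α → ℝ) : ℝ :=
  expect μ (fun a => f a * g a) - expect μ f * expect μ g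

def var (μ : α → ℝ) (f : α → ℝ) : ℝ :=
  expect μ (fun a => f a ^ 2) - expect μ f ^ 2

lemma cov_eq_expect_centered (hμ : IsDist μ) (f g : α → ℝ) :
    cov μ f g = expect μ (fun a => (f a - expect μ f) * (g a - expect μ g)) := by
  set m := expect μ f
  set n := expect μ g
  have hm : ∑ a, μ a * f a = m := rfl
  have hn : ∑ a, μ a * g a = n := rfl
  simp only [cov, expect, mul_sub, sub_mul, Finset.sum_sub_distrib, ← mul_assoc,
    ← Finset.sum_mul, hμ.2, hm, hn]
  have hmn : ∑ a, μ a * m * g a = m * n := by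
    simp only [mul_comm (μ _) m, mul_assoc, ← Finset.mul_sum, hn]
  rw [hmn]
  ring

lemma cov_const_left (hμ : IsDist μ) (c : ℝ) (g : α → ℝ) : cov μ (fun _ => c) g = 0 := by
  simp only [cov, expect_const hμ, expect_const_mul, sub_self]

lemma cov_self (μ : α → ℝ) (f : α → ℝ) : cov μ f f = var μ f := by
  simp only [cov, var, sq]

lemma var_eq_expect_centered (hμ : IsDist μ) (f : α → ℝ) :
    var μ f = expect μ (fun a => (f a - expect μ f) ^ 2) := by
  simp only [sq, ← cov_eq_expect_centered hμ, cov_self]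

lemma var_nonneg (hμ : IsDist μ) (f : α → ℝ) : 0 ≤ var μ f := by
  rw [var_eq_expect_centered hμ]
  exact expect_nonneg hμ.1 fun _ => sq_nonneg _

lemma cov_le_sqrt_var_mul_sqrt_var (hμ : IsDist μ) (f g : α → ℝ) :
    cov μ f g ≤ √(var μ f) * √(var μ g) := by
  rw [cov_eq_expect_centered hμ, var_eq_expect_centered hμ, var_eq_expect_centered hμ]
  exact expect_mul_le_sqrt hμ.1 _ _

lemma var_le_one (hμ : IsDist μ) {f : α → ℝ} (hf : ∀ a, f a ∈ Set.Icc (0 : ℝ) 1) :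
    var μ f ≤ 1 := by
  have : expect μ (fun a => f a ^ 2) ≤ 1 :=
    (expect_mem_Icc hμ fun a => ⟨sq_nonneg _, pow_le_one₀ (hf a).1 (hf a).2⟩).2
  unfold var
  nlinarith

lemma cov_comp_equiv (μ : α → ℝ) (e : β ≃ α) (f g : β → ℝ) :
    cov (μ ∘ e) f g = cov μ (f ∘ e.symm) (g ∘ e.symm) := by
  simp only [cov, expect_comp_equiv]; rfl

lemma var_comp_equiv (μ : α → ℝ) (e : β ≃ α) (f : β → ℝ) :
    var (μ ∘ e) f = var μ (f ∘ e.symm) := by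
  simp only [var, expect_comp_equiv]; rfl

lemma expect_centered_div (hμ : IsDist μ) (f : α → ℝ) (s : ℝ) :
    expect μ (fun a => (f a - expect μ f) / s) = 0 := by
  simp only [div_eq_mul_inv, expect_mul_const, expect_sub, expect_const hμ, sub_self, zero_mul]

lemma expect_centered_div_mul_centered_div (hμ : IsDist μ) (f g : α → ℝ) (s t : ℝ) :
    expect μ (fun a => (f a - expect μ f) / s * ((g a - expect μ g) / t)) =
      cov μ f g / (s * t) := by
  simp_rw [div_mul_div_comm, div_eq_mul_inv (_ * _), expect_mul_const, ← div_eq_mul_inv,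
    cov_eq_expect_centered hμ]

end Covariance

lemma sSup_nonneg_of_neg_mem {S : Set ℝ} (hS : ∀ t ∈ S, -t ∈ S) : 0 ≤ sSup S := by
  obtain rfl | ⟨t, ht⟩ := S.eq_empty_or_nonempty
  · exact Real.sSup_empty.ge
  obtain h | h := le_total 0 t
  · exact Real.sSup_nonneg' ⟨t, ht, h⟩
  · exact Real.sSup_nonneg' ⟨-t, hS t ht, neg_nonneg.2 h⟩

section Correlation
variable {A B : Type*} [Fintype A] [Fintype B] {σ : A × B → ℝ}

lemma expect_fst (μ : A × B → ℝ) (h : A → ℝ) :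
    expect μ (fun p => h p.1) = expect (margFst μ) h := by
  simp [expect, margFst, Fintype.sum_prod_type, Finset.sum_mul]

lemma expect_snd (μ : A × B → ℝ) (h : B → ℝ) :
    expect μ (fun p => h p.2) = expect (margSnd μ) h := by
  simp [expect, margSnd, Fintype.sum_prod_type_right, Finset.sum_mul]

lemma cor_nonneg (σ : A × B → ℝ) : 0 ≤ cor σ := by
  refine sSup_nonneg_of_neg_mem ?_
  rintro _ ⟨f, g, hf, hg, hf2, hg2, rfl⟩
  refine ⟨fun a => -f a, g, ?_, hg, by simpa using hf2, hg2, ?_⟩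
  · simpa [expect] using hf
  · simp [Finset.sum_neg_distrib]

lemma le_cor (hσ : 0 ≤ σ) {f : A → ℝ} {g : B → ℝ}
    (hf : expect (margFst σ) f = 0) (hg : expect (margSnd σ) g = 0)
    (hf2 : expect (margFst σ) (fun a => f a ^ 2) = 1)
    (hg2 : expect (margSnd σ) (fun b => g b ^ 2) = 1) :
    expect σ (fun p => f p.1 * g p.2) ≤ cor σ := by
  refine le_csSup ⟨1, ?_⟩ ⟨f, g, hf, hg, hf2, hg2, rfl⟩
  rintro _ ⟨f, g, -, -, hf2, hg2, rfl⟩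
  have := expect_mul_le_sqrt hσ (fun p => f p.1) (fun p => g p.2)
  rwa [expect_fst σ (fun a => f a ^ 2), expect_snd σ (fun b => g b ^ 2), hf2, hg2,
    Real.sqrt_one, mul_one] at this

/-- `cor μ ≤ c`, stated for all `F`, `G` without normalisation: this is the form that
tensorizes. -/
def CorLE (μ : A × B → ℝ) (c : ℝ) : Prop :=
  ∀ (F : A → ℝ) (G : B → ℝ), cov μ (fun p => F p.1) (fun p => G p.2) ≤
    c * (√(var μ (fun p => F p.1)) * √(var μ (fun p => G p.2)))

lemma corLE_cor (hσ : IsDist σ) : CorLE σ (cor σ) := by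
  intro F G
  set f : A × B → ℝ := fun p => F p.1
  set g : A × B → ℝ := fun p => G p.2
  have hcs := cov_le_sqrt_var_mul_sqrt_var hσ f g
  obtain hs | hs := (Real.sqrt_nonneg (var σ f)).eq_or_lt
  · rw [← hs] at hcs ⊢
    simpa using hcs
  obtain ht | ht := (Real.sqrt_nonneg (var σ g)).eq_or_lt
  · rw [← ht] at hcs ⊢
    simpa using hcs
  set s := √(var σ f)
  set t := √(var σ g)
  have hnorm_sq : ∀ (h : A × B → ℝ), 0 < √(var σ h) →
      expect σ (fun p => (h p - expect σ h) / √(var σ h) * ((h p - expect σ h) / √(var σ h)))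
        = 1 := fun h hpos => by
    rw [expect_centered_div_mul_centered_div hσ, cov_self, ← sq, Real.sq_sqrt (var_nonneg hσ h),
      div_self (Real.sqrt_pos.1 hpos).ne']
  have hnorm := le_cor hσ.1 (f := fun a => (F a - expect σ f) / s)
    (g := fun b => (G b - expect σ g) / t) (by rw [← expect_fst]; exact expect_centered_div hσ f s)
    (by rw [← expect_snd]; exact expect_centered_div hσ g t)
    (by rw [← expect_fst]; simpa only [sq] using hnorm_sq f hs)
    (by rw [← expect_snd]; simpa only [sq] using hnorm_sq g ht)
  rw [expect_centered_div_mul_centered_div hσ, div_le_iff₀ (by positivity)] at hnorm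
  linarith

lemma CorLE.comp_equiv {A' B' : Type*} [Fintype A'] [Fintype B'] {μ : A × B → ℝ} {c : ℝ}
    (h : CorLE μ c) (e₁ : A' ≃ A) (e₂ : B' ≃ B) :
    CorLE (μ ∘ e₁.prodCongr e₂) c := by
  intro F G
  rw [cov_comp_equiv, var_comp_equiv, var_comp_equiv]
  exact h (F ∘ e₁.symm) (G ∘ e₂.symm)

lemma expect_mul_le_of_corLE {μ : A × B → ℝ} {c : ℝ}
    (hμ : IsDist μ) (hc : 0 ≤ c) (h : CorLE μ c) {F : A → ℝ} {G : B → ℝ}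
    (hF : ∀ a, F a ∈ Set.Icc (0 : ℝ) 1) (hG : ∀ b, G b ∈ Set.Icc (0 : ℝ) 1) :
    expect μ (fun p => F p.1 * G p.2) ≤
      expect μ (fun p => F p.1) * expect μ (fun p => G p.2) + c := by
  have h_sqrt_le_one : √(var μ (fun p => F p.1)) * √(var μ (fun p => G p.2)) ≤ 1 :=
    mul_le_one₀ (Real.sqrt_le_one.2 (var_le_one hμ fun p => hF p.1)) (Real.sqrt_nonneg _)
      (Real.sqrt_le_one.2 (var_le_one hμ fun p => hG p.2))
  have := (h F G).trans (mul_le_of_le_one_right hc h_sqrt_le_one)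
  rw [cov] at this
  linarith

end Correlation

lemma sqrt_mul_sqrt_add_sqrt_mul_sqrt_le {a b c d : ℝ} (ha : 0 ≤ a) (hb : 0 ≤ b) (hc : 0 ≤ c)
    (hd : 0 ≤ d) : √a * √b + √c * √d ≤ √(a + c) * √(b + d) := by
  simpa [Fin.sum_univ_two] using
    Real.sum_sqrt_mul_sqrt_le Finset.univ (f := ![a, c]) (g := ![b, d])
      (by simp [Fin.forall_fin_two, ha, hc]) (by simp [Fin.forall_fin_two, hb, hd])

section Tensor
variable {A B A' B' : Type*} [Fintype A] [Fintype B] [Fintype A'] [Fintype B']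
  {σ : A × B → ℝ} {τ : A' × B' → ℝ}

def slice (h : (A × A') × (B × B') → ℝ) (r : A × B) : A' × B' → ℝ :=
  fun q => h ((r.1, q.1), (r.2, q.2))

lemma expect_tensor (σ : A × B → ℝ) (τ : A' × B' → ℝ) (h : (A × A') × (B × B') → ℝ) :
    expect (tensor σ τ) h = expect σ (fun r => expect τ (slice h r)) := by
  rw [expect, ← Equiv.sum_comp (Equiv.prodProdProdComm A B A' B'), Fintype.sum_prod_type]
  simp only [expect, Finset.mul_sum, slice, tensor, mul_assoc]
  rfl

lemma IsDist.tensor (hσ : IsDist σ) (hτ : IsDist τ) : IsDist (tensor σ τ) :=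
  ⟨fun p => mul_nonneg (hσ.1 _) (hτ.1 _), by
    simpa [expect, slice, hσ.2, hτ.2] using expect_tensor σ τ (fun _ => 1)⟩

lemma cov_tensor (σ : A × B → ℝ) (τ : A' × B' → ℝ) (f g : (A × A') × (B × B') → ℝ) :
    cov (tensor σ τ) f g =
      cov σ (fun r => expect τ (slice f r)) (fun r => expect τ (slice g r)) +
        expect σ (fun r => cov τ (slice f r) (slice g r)) := by
  have slice_mul : ∀ r, slice (fun p => f p * g p) r = fun q => slice f r q * slice g r q :=
    fun _ => rfl
  simp only [cov, expect_tensor, expect_sub, slice_mul]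
  ring

lemma var_tensor (σ : A × B → ℝ) (τ : A' × B' → ℝ) (f : (A × A') × (B × B') → ℝ) :
    var (tensor σ τ) f =
      var σ (fun r => expect τ (slice f r)) + expect σ (fun r => var τ (slice f r)) := by
  simpa only [cov_self] using cov_tensor σ τ f f

lemma CorLE.tensor {c : ℝ} (hσ : IsDist σ) (hτ : IsDist τ) (hc : 0 ≤ c) (h₁ : CorLE σ c)
    (h₂ : CorLE τ c) : CorLE (tensor σ τ) c := by
  intro F G
  set f : (A × A') × (B × B') → ℝ := fun p => F p.1
  set g : (A × A') × (B × B') → ℝ := fun p => G p.2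
  have h_mean :=
    h₁ (fun a => expect τ (fun q => F (a, q.1))) (fun b => expect τ (fun q => G (b, q.2)))
  have h_slice : ∀ r, cov τ (slice f r) (slice g r) ≤
      c * (√(var τ (slice f r)) * √(var τ (slice g r))) :=
    fun r => h₂ (fun a' => F (r.1, a')) (fun b' => G (r.2, b'))
  have h_cs :=
    expect_mul_le_sqrt hσ.1 (fun r => √(var τ (slice f r))) (fun r => √(var τ (slice g r)))
  simp only [Real.sq_sqrt (var_nonneg hτ _)] at h_cs
  rw [cov_tensor, var_tensor, var_tensor]
  calc _ ≤ c * (√(var σ fun r => expect τ (slice f r)) * √(var σ fun r => expect τ (slice g r))) +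
        c * expect σ (fun r => √(var τ (slice f r)) * √(var τ (slice g r))) := by
        rw [← expect_const_mul]
        exact add_le_add h_mean (expect_mono hσ.1 h_slice)
    _ ≤ c * (√(var σ fun r => expect τ (slice f r)) * √(var σ fun r => expect τ (slice g r))) +
        c * (√(expect σ fun r => var τ (slice f r)) * √(expect σ fun r => var τ (slice g r))) := by
        exact add_le_add_right (mul_le_mul_of_nonneg_left h_cs hc) _
    _ ≤ _ := by
        rw [← mul_add]
        gcongr
        exact sqrt_mul_sqrt_add_sqrt_mul_sqrt_le (var_nonneg hσ _) (var_nonneg hσ _)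
          (expect_nonneg hσ.1 fun _ => var_nonneg hτ _)
          (expect_nonneg hσ.1 fun _ => var_nonneg hτ _)

end Tensor

lemma iid_succ (σ : X × Y → ℝ) (ℓ : ℕ) :
    iid σ (ℓ + 1) = tensor σ (iid σ ℓ) ∘
      (Fin.consEquiv fun _ => X).symm.prodCongr (Fin.consEquiv fun _ => Y).symm := by
  funext p
  simp [iid, tensor, Fin.prod_univ_succ, Fin.tail]

section IID
variable [Fintype X] [Fintype Y] {σ : X × Y → ℝ}

lemma isDist_iid (hσ : IsDist σ) (ℓ : ℕ) : IsDist (iid σ ℓ) := by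
  induction ℓ with
  | zero => exact ⟨fun _ => by simp [iid], by simp [iid]⟩
  | succ ℓ ih =>
    rw [iid_succ]
    exact (hσ.tensor ih).comp_equiv _

lemma corLE_iid (hσ : IsDist σ) (ℓ : ℕ) : CorLE (iid σ ℓ) (cor σ) := by
  induction ℓ with
  | zero =>
    intro F G
    have hF : (fun p : (Fin 0 → X) × (Fin 0 → Y) => F p.1) = fun _ => F default :=
      funext fun p => congrArg F (Subsingleton.elim _ _)
    rw [hF, cov_const_left (isDist_iid hσ 0)]
    exact mul_nonneg (cor_nonneg σ) (by positivity)
  | succ ℓ ih =>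
    rw [iid_succ]
    exact ((corLE_cor hσ).tensor hσ (isDist_iid hσ ℓ) (cor_nonneg σ) ih).comp_equiv _ _

end IID

section Protocol
variable [Fintype U] [Fintype V] [Fintype X] [Fintype Y]

lemma expect_iid_tensor (ρ : U × V → ℝ) (σ : X × Y → ℝ) (ℓ : ℕ)
    (h : (Fin ℓ → U × X) × (Fin ℓ → V × Y) → ℝ) :
    expect (iid (tensor ρ σ) ℓ) h = expect (iid ρ ℓ) (fun uv => expect (iid σ ℓ)
      (fun xy => h (fun i => (uv.1 i, xy.1 i), fun i => (uv.2 i, xy.2 i)))) := by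
  let e := (Equiv.arrowProdEquivProdArrow (Fin ℓ) (fun _ => U) (fun _ => X)).symm.prodCongr
    (Equiv.arrowProdEquivProdArrow (Fin ℓ) (fun _ => V) (fun _ => Y)).symm
  have h_iid : iid (tensor ρ σ) ℓ ∘ e = tensor (iid ρ ℓ) (iid σ ℓ) := by
    funext p
    simp [e, iid, tensor, Finset.prod_mul_distrib]
  have key := expect_tensor (iid ρ ℓ) (iid σ ℓ) (h ∘ e)
  rw [← h_iid, expect_comp_equiv, Function.comp_assoc, e.self_comp_symm,
    Function.comp_id] at key
  exact key

def avgFst (σ : X × Y → ℝ) (ℓ : ℕ) (F : (Fin ℓ → U × X) → ℝ) (u : Fin ℓ → U) : ℝ :=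
  expect (iid σ ℓ) (fun xy => F (fun i => (u i, xy.1 i)))

def avgSnd (σ : X × Y → ℝ) (ℓ : ℕ) (G : (Fin ℓ → V × Y) → ℝ) (v : Fin ℓ → V) : ℝ :=
  expect (iid σ ℓ) (fun xy => G (fun i => (v i, xy.2 i)))

lemma success_le_avg_success_add_cor {ρ : U × V → ℝ} {σ : X × Y → ℝ} (hρ : IsDist ρ)
    (hσ : IsDist σ) {ℓ : ℕ}
    {F : (Fin ℓ → U × X) → ℝ} {G : (Fin ℓ → V × Y) → ℝ}
    (hF : ∀ x, F x ∈ Set.Icc (0 : ℝ) 1) (hG : ∀ y, G y ∈ Set.Icc (0 : ℝ) 1) :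
    expect (iid (tensor ρ σ) ℓ) (fun w => F w.1 * G w.2) ≤
      expect (iid ρ ℓ) (fun uv => avgFst σ ℓ F uv.1 * avgSnd σ ℓ G uv.2) + cor σ := by
  rw [expect_iid_tensor, ← expect_add_const (isDist_iid hρ ℓ)]
  exact expect_mono (isDist_iid hρ ℓ).1 fun uv =>
    expect_mul_le_of_corLE (isDist_iid hσ ℓ) (cor_nonneg σ) (corLE_iid hσ ℓ)
      (F := fun x => F fun i => (uv.1 i, x i)) (G := fun y => G fun i => (uv.2 i, y i))
      (fun _ => hF _) (fun _ => hG _)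

lemma agr_le_agr_of_simulation {U' V' : Type*} [Fintype U'] [Fintype V'] {ρ : U × V → ℝ}
    {ρ' : U' × V' → ℝ} {p p' : ℝ} (hρ : IsDist ρ) (hp' : p' ≤ 1)
    (h : ∀ ℓ (F : (Fin ℓ → U') → ℝ) (G : (Fin ℓ → V') → ℝ),
      (∀ x, F x ∈ Set.Icc (0 : ℝ) 1) → (∀ y, G y ∈ Set.Icc (0 : ℝ) 1) →
      p' ≤ expect (iid ρ' ℓ) (fun w => F w.1 * G w.2) →
      ∃ (f : (Fin ℓ → U) → ℝ) (g : (Fin ℓ → V) → ℝ),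
        (∀ x, f x ∈ Set.Icc (0 : ℝ) 1) ∧ (∀ y, g y ∈ Set.Icc (0 : ℝ) 1) ∧
        p ≤ expect (iid ρ ℓ) (fun x => f x.1 * g x.2) ∧
        expect (iid ρ ℓ) (fun x => f x.1) + expect (iid ρ ℓ) (fun x => g x.2) =
          expect (iid ρ' ℓ) (fun w => F w.1) + expect (iid ρ' ℓ) (fun w => G w.2)) :
    agr ρ p ≤ agr ρ' p' := by
  refine csInf_le_csInf ⟨0, ?_⟩ ⟨_, 0, fun _ => 1, fun _ => 1, by simp, by simp, ?_, rfl⟩ ?_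
  · rintro _ ⟨ℓ, f, g, hf, hg, -, rfl⟩
    exact add_nonneg (expect_nonneg (isDist_iid hρ ℓ).1 fun x => (hf x.1).1)
      (expect_nonneg (isDist_iid hρ ℓ).1 fun x => (hg x.2).1)
  · simpa [iid] using hp'
  · rintro _ ⟨ℓ, F, G, hF, hG, hp, rfl⟩
    obtain ⟨f, g, hf, hg, hp, hcost⟩ := h ℓ F G hF hG hp
    exact ⟨ℓ, f, g, hf, hg, hp, hcost.symm⟩

end Protocol

theorem stmt10_general {U V X Y : Type} [Fintype U] [Fintype V] [Fintype X] [Fintype Y]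
    (ρ : U × V → ℝ) (σ : X × Y → ℝ) (hρ : IsDist ρ) (hσ : IsDist σ)
    (p : ℝ) (h2 : p < 1) :
    agr ρ (p - cor σ) ≤ agr (tensor ρ σ) p := by
  refine agr_le_agr_of_simulation hρ h2.le fun ℓ F G hF hG hp => ?_
  refine ⟨avgFst σ ℓ F, avgSnd σ ℓ G, fun u => expect_mem_Icc (isDist_iid hσ ℓ) fun _ => hF _,
    fun v => expect_mem_Icc (isDist_iid hσ ℓ) fun _ => hG _, ?_, ?_⟩
  · linarith [success_le_avg_success_add_cor hρ hσ hF hG]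
  · simp only [expect_iid_tensor]
    rfl

theorem stmt10 {U V X Y : Type} [Fintype U] [Fintype V] [Fintype X] [Fintype Y]
    [Nonempty U] [Nonempty V] [Nonempty X] [Nonempty Y]
    (ρ : U × V → ℝ) (σ : X × Y → ℝ) (hρ : IsDist ρ) (hσ : IsDist σ)
    (p : ℝ) (h1 : cor σ < p) (h2 : p < 1) :
    agr ρ (p - cor σ) ≤ agr (tensor ρ σ) p :=
  stmt10_general ρ σ hρ hσ p h2

end SR
end

section
/- Let m ≥ 2 and b ∈ {0,1}, and let σ_{m,b} be the uniform distribution over {(u,v) ∈ 𝔽₂^m × 𝔽₂^m : u·v = b}. Then Cor(σ_{m,b}) ≤ 1/2^{m/2−1}. -/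
open scoped BigOperators ENNReal

namespace SR

variable {U V X Y : Type*}

/-!
Writing `1[u ⬝ v = b] = (1 + χ(b) χ(u ⬝ v)) / 2` with `χ(x) = (-1)^x`, the correlation
`E_σ[f(u) g(v)]` becomes `((∑ f)(∑ g) + χ(b) fᵀ H g) / (2^m (2^m + χ(b)))`, where
`H = (χ(u ⬝ v))` is the Sylvester–Hadamard matrix. Since `H Hᵀ = 2^m I`, Cauchy–Schwarz gives
`|fᵀ H g| ≤ 2^{m/2} ‖f‖ ‖g‖`. Both marginals are uniform away from `0`, so the moment constraints
determine `∑ f` and `‖f‖²` up to the value `f 0`. For `b = 1` the point `0` carries no mass and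
`f 0`, `g 0` may be replaced by `0`; for `b = 0` the term `(∑ f)(∑ g) = f 0 * g 0` is of lower
order.
-/

open Finset Matrix

lemma sum_update_eq_sub {α : Type*} [Fintype α] [DecidableEq α] (h : α → ℝ) (a : α) :
    ∑ x, Function.update h a 0 x = ∑ x, h x - h a := by
  rw [sum_update_of_mem (mem_univ a), zero_add, sum_eq_sum_sdiff_singleton_add (mem_univ a) h,
    add_sub_cancel_right]

lemma sq_dotProduct_mulVec_le {ι κ : Type*} [Fintype ι] [Fintype κ] [DecidableEq ι]
    (H : Matrix ι κ ℝ) (N : ℝ) (hH : H * Hᵀ = N • 1) (f : ι → ℝ) (g : κ → ℝ) :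
    (f ⬝ᵥ H *ᵥ g) ^ 2 ≤ N * (∑ i, f i ^ 2) * ∑ j, g j ^ 2 := by
  have hnorm : (f ᵥ* H) ⬝ᵥ (f ᵥ* H) = N * (f ⬝ᵥ f) := by
    rw [← dotProduct_mulVec, ← mulVec_transpose, mulVec_mulVec, hH, smul_mulVec, one_mulVec,
      dotProduct_smul, smul_eq_mul]
  simp only [dotProduct, ← sq] at hnorm
  rw [dotProduct_mulVec, ← hnorm]
  exact sum_mul_sq_le_sq_mul_sq univ (f ᵥ* H) g

lemma zmod2_eq_zero_or_eq_one (x : ZMod 2) : x = 0 ∨ x = 1 := by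
  revert x; decide

def chi : AddChar (ZMod 2) ℝ where
  toFun x := if x = 0 then 1 else -1
  map_zero_eq_one' := if_pos rfl
  map_add_eq_mul' a b := by
    rcases zmod2_eq_zero_or_eq_one a with rfl | rfl <;>
      rcases zmod2_eq_zero_or_eq_one b with rfl | rfl <;>
      simp [show (1 + 1 : ZMod 2) = 0 from rfl]

@[simp] lemma chi_one : chi 1 = -1 := rfl

@[simp] lemma chi_eq_one_iff {x : ZMod 2} : chi x = 1 ↔ x = 0 := by
  rcases zmod2_eq_zero_or_eq_one x with rfl | rfl <;> norm_num

lemma ite_eq_one_add_chi_mul_chi (x b : ZMod 2) :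
    (if x = b then (1 : ℝ) else 0) = (1 + chi b * chi x) / 2 := by
  rcases zmod2_eq_zero_or_eq_one x with rfl | rfl <;>
    rcases zmod2_eq_zero_or_eq_one b with rfl | rfl <;> norm_num

section Hadamard

variable {ι : Type*} [Fintype ι]

def dotChar (w : ι → ZMod 2) : AddChar (ι → ZMod 2) ℝ where
  toFun v := chi (w ⬝ᵥ v)
  map_zero_eq_one' := by simp
  map_add_eq_mul' v v' := by rw [dotProduct_add, AddChar.map_add_eq_mul]

lemma dotChar_eq_zero_iff {w : ι → ZMod 2} : dotChar w = 0 ↔ w = 0 := by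
  classical
  refine ⟨fun h => funext fun i => ?_, fun h => ?_⟩
  · simpa [dotChar, dotProduct_single] using DFunLike.congr_fun h (Pi.single i 1)
  · ext v; simp [dotChar, h]

def hadamard : Matrix (ι → ZMod 2) (ι → ZMod 2) ℝ := Matrix.of fun u v => chi (u ⬝ᵥ v)

lemma hadamard_transpose : (hadamard : Matrix (ι → ZMod 2) _ ℝ)ᵀ = hadamard := by
  ext u v
  simp [hadamard, dotProduct_comm]

variable [DecidableEq ι]

lemma sum_chi_dotProduct (w : ι → ZMod 2) :
    ∑ v, chi (w ⬝ᵥ v) = if w = 0 then (2 : ℝ) ^ Fintype.card ι else 0 := by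
  have := AddChar.sum_eq_ite (dotChar w)
  simp only [dotChar_eq_zero_iff, Fintype.card_pi, ZMod.card, prod_const, card_univ] at this
  exact_mod_cast this

lemma hadamard_mul_transpose :
    hadamard * hadamardᵀ = (2 ^ Fintype.card ι : ℝ) • (1 : Matrix (ι → ZMod 2) _ ℝ) := by
  ext u u'
  have key : ∀ v, chi (u ⬝ᵥ v) * chi (u' ⬝ᵥ v) = chi ((u - u') ⬝ᵥ v) := fun v => by
    rw [sub_dotProduct, sub_eq_add_neg, ZMod.neg_eq_self_mod_two, AddChar.map_add_eq_mul]
  simp only [hadamard, mul_apply, transpose_apply, of_apply, key, sum_chi_dotProduct, sub_eq_zero,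
    Matrix.smul_apply, Matrix.one_apply, smul_eq_mul, mul_ite, mul_one, mul_zero]

lemma sq_dotProduct_hadamard_mulVec_le (f g : (ι → ZMod 2) → ℝ) :
    (f ⬝ᵥ hadamard *ᵥ g) ^ 2 ≤ 2 ^ Fintype.card ι * (∑ u, f u ^ 2) * ∑ v, g v ^ 2 :=
  sq_dotProduct_mulVec_le _ _ hadamard_mul_transpose f g

end Hadamard

section sigmaIP

variable {m : ℕ}

lemma ipF2_eq_dotProduct (u v : Fin m → ZMod 2) : ipF2 u v = u ⬝ᵥ v := rfl

lemma card_filter_ipF2_eq (b : ZMod 2) :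
    ((univ.filter fun q : (Fin m → ZMod 2) × (Fin m → ZMod 2) => ipF2 q.1 q.2 = b).card : ℝ)
      = 2 ^ m * (2 ^ m + chi b) / 2 := by
  rw [← sum_boole, Fintype.sum_prod_type]
  simp_rw [ite_eq_one_add_chi_mul_chi, ipF2_eq_dotProduct, ← sum_div, sum_add_distrib, ← mul_sum,
    sum_chi_dotProduct]
  simp only [sum_const, card_univ, Fintype.card_pi, ZMod.card, prod_const, Fintype.card_fin,
    nsmul_eq_mul, Nat.cast_pow, Nat.cast_ofNat, mul_one, sum_ite_eq', mem_univ, if_true]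
  ring

lemma sigmaIP_apply (b : ZMod 2) (u v : Fin m → ZMod 2) :
    sigmaIP m b (u, v) = (1 + chi b * hadamard u v) / (2 ^ m * (2 ^ m + chi b)) := by
  rw [sigmaIP, ← boole_mul, card_filter_ipF2_eq, inv_div, ite_eq_one_add_chi_mul_chi]
  simp only [hadamard, of_apply, ipF2_eq_dotProduct]
  ring

lemma sum_sigmaIP_mul (b : ZMod 2) (f g : (Fin m → ZMod 2) → ℝ) :
    ∑ x, sigmaIP m b x * (f x.1 * g x.2)
      = ((∑ u, f u) * (∑ v, g v) + chi b * (f ⬝ᵥ hadamard *ᵥ g)) / (2 ^ m * (2 ^ m + chi b)) := by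
  have hnum : (∑ u, f u) * (∑ v, g v) + chi b * (f ⬝ᵥ hadamard *ᵥ g)
      = ∑ u, ∑ v, (1 + chi b * hadamard u v) * (f u * g v) := by
    rw [sum_mul_sum]
    simp only [add_mul, one_mul, sum_add_distrib, dotProduct, mulVec, mul_sum]
    congr 1
    exact sum_congr rfl fun u _ => sum_congr rfl fun v _ => by ring
  simp only [hnum, Fintype.sum_prod_type, sigmaIP_apply, sum_div, div_mul_eq_mul_div]

lemma margFst_sigmaIP (b : ZMod 2) (u : Fin m → ZMod 2) :
    margFst (sigmaIP m b) u = (1 + if u = 0 then chi b else 0) / (2 ^ m + chi b) := by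
  have hN : (2 : ℝ) ^ m ≠ 0 := by positivity
  simp only [margFst, sigmaIP_apply, ← sum_div, sum_add_distrib, ← mul_sum, hadamard, of_apply,
    sum_chi_dotProduct, Fintype.card_fin]
  rw [← mul_div_mul_left _ (2 ^ m + chi b) hN]
  split_ifs <;> simp only [sum_const, card_univ, Fintype.card_pi, ZMod.card, prod_const,
    Fintype.card_fin, nsmul_eq_mul, Nat.cast_pow, Nat.cast_ofNat, mul_one, mul_zero, add_zero]
  ring

lemma margSnd_sigmaIP (b : ZMod 2) : margSnd (sigmaIP m b) = margFst (sigmaIP m b) := by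
  ext v
  refine sum_congr rfl fun u _ => ?_
  rw [sigmaIP_apply, sigmaIP_apply, ← transpose_apply hadamard, hadamard_transpose]

lemma expect_margFst_sigmaIP (b : ZMod 2) (h : (Fin m → ZMod 2) → ℝ) :
    expect (margFst (sigmaIP m b)) h = (∑ u, h u + chi b * h 0) / (2 ^ m + chi b) := by
  simp only [expect, margFst_sigmaIP, div_mul_eq_mul_div, ← sum_div, add_mul, one_mul, ite_mul,
    zero_mul, sum_add_distrib, sum_ite_eq']
  simp

lemma moments_of_expect_margFst_sigmaIP {b : ZMod 2} {f : (Fin m → ZMod 2) → ℝ}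
    (hf : expect (margFst (sigmaIP m b)) f = 0)
    (hf2 : expect (margFst (sigmaIP m b)) (fun u => f u ^ 2) = 1) :
    ∑ u, f u + chi b * f 0 = 0 ∧ ∑ u, f u ^ 2 + chi b * f 0 ^ 2 = 2 ^ m + chi b := by
  rw [expect_margFst_sigmaIP] at hf hf2
  have hD : (2 : ℝ) ^ m + chi b ≠ 0 := by
    rintro hD
    simp [hD] at hf2
  exact ⟨(div_eq_zero_iff.1 hf).resolve_right hD, (div_eq_one_iff_eq hD).1 hf2⟩

lemma sum_sigmaIP_zero_mul_le {f g : (Fin m → ZMod 2) → ℝ}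
    (hf : ∑ u, f u + f 0 = 0) (hf2 : ∑ u, f u ^ 2 + f 0 ^ 2 = 2 ^ m + 1)
    (hg : ∑ v, g v + g 0 = 0) (hg2 : ∑ v, g v ^ 2 + g 0 ^ 2 = 2 ^ m + 1) :
    ∑ x, sigmaIP m 0 x * (f x.1 * g x.2) ≤ 2 / √(2 ^ m) := by
  set s := √((2 : ℝ) ^ m)
  have hs2 : s ^ 2 = 2 ^ m := Real.sq_sqrt (by positivity)
  have hs1 : 1 ≤ s := Real.one_le_sqrt.2 (one_le_pow₀ one_le_two)
  have hf0 : f 0 ^ 2 ≤ ∑ u, f u ^ 2 := single_le_sum (fun u _ => sq_nonneg (f u)) (mem_univ 0)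
  have hg0 : g 0 ^ 2 ≤ ∑ v, g v ^ 2 := single_le_sum (fun v _ => sq_nonneg (g v)) (mem_univ 0)
  have hB : f ⬝ᵥ hadamard *ᵥ g ≤ s * (2 ^ m + 1) := by
    refine le_of_sq_le_sq ?_ (by positivity)
    calc (f ⬝ᵥ hadamard *ᵥ g) ^ 2 ≤ 2 ^ m * (∑ u, f u ^ 2) * ∑ v, g v ^ 2 := by
          simpa using sq_dotProduct_hadamard_mulVec_le f g
      _ ≤ 2 ^ m * (2 ^ m + 1) * (2 ^ m + 1) := by gcongr <;> nlinarith
      _ = (s * (2 ^ m + 1)) ^ 2 := by rw [mul_pow, hs2]; ring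
  have hfg : f 0 * g 0 ≤ (2 ^ m + 1) / 2 := by nlinarith [sq_nonneg (f 0 - g 0)]
  rw [sum_sigmaIP_mul, eq_neg_of_add_eq_zero_left hf, eq_neg_of_add_eq_zero_left hg,
    AddChar.map_zero_eq_one, one_mul]
  refine div_le_of_le_mul₀ (by positivity) (by positivity) ?_
  rw [← hs2]
  field_simp
  nlinarith

lemma sigmaIP_one_apply_of_eq_zero_or_eq_zero {u v : Fin m → ZMod 2} (h : u = 0 ∨ v = 0) :
    sigmaIP m 1 (u, v) = 0 := by
  rcases h with rfl | rfl <;> simp [sigmaIP, ipF2]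

lemma sum_sigmaIP_one_mul_le {f g : (Fin m → ZMod 2) → ℝ}
    (hf : ∑ u, f u - f 0 = 0) (hf2 : ∑ u, f u ^ 2 - f 0 ^ 2 = 2 ^ m - 1)
    (hg : ∑ v, g v - g 0 = 0) (hg2 : ∑ v, g v ^ 2 - g 0 ^ 2 = 2 ^ m - 1) :
    ∑ x, sigmaIP m 1 x * (f x.1 * g x.2) ≤ 2 / √(2 ^ m) := by
  set s := √((2 : ℝ) ^ m)
  have hs2 : s ^ 2 = 2 ^ m := Real.sq_sqrt (by positivity)
  have hN : (1 : ℝ) ≤ 2 ^ m := one_le_pow₀ one_le_two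
  have hs1 : 1 ≤ s := Real.one_le_sqrt.2 hN
  set f' := Function.update f 0 0
  set g' := Function.update g 0 0
  have hf' : ∑ u, f' u = 0 := by rw [sum_update_eq_sub, hf]
  have hg' : ∑ v, g' v = 0 := by rw [sum_update_eq_sub, hg]
  have hf'2 : ∑ u, f' u ^ 2 = 2 ^ m - 1 := by
    rw [← hf2, ← sum_update_eq_sub (fun u => f u ^ 2)]
    exact sum_congr rfl fun u _ => by rcases eq_or_ne u 0 with rfl | hu <;> simp [f', *]
  have hg'2 : ∑ v, g' v ^ 2 = 2 ^ m - 1 := by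
    rw [← hg2, ← sum_update_eq_sub (fun v => g v ^ 2)]
    exact sum_congr rfl fun v _ => by rcases eq_or_ne v 0 with rfl | hv <;> simp [g', *]
  have hsupp : ∑ x, sigmaIP m 1 x * (f x.1 * g x.2)
      = ∑ x, sigmaIP m 1 x * (f' x.1 * g' x.2) := by
    refine sum_congr rfl fun ⟨u, v⟩ _ => ?_
    by_cases h : u = 0 ∨ v = 0
    · simp [sigmaIP_one_apply_of_eq_zero_or_eq_zero h]
    · obtain ⟨hu, hv⟩ := not_or.1 h
      simp [f', g', hu, hv]
  have hB : -(f' ⬝ᵥ hadamard *ᵥ g') ≤ s * (2 ^ m - 1) := by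
    refine neg_le.1 (abs_le_of_sq_le_sq' ?_ (by positivity)).1
    calc (f' ⬝ᵥ hadamard *ᵥ g') ^ 2 ≤ 2 ^ m * (∑ u, f' u ^ 2) * ∑ v, g' v ^ 2 := by
          simpa using sq_dotProduct_hadamard_mulVec_le f' g'
      _ = (s * (2 ^ m - 1)) ^ 2 := by rw [hf'2, hg'2, mul_pow, hs2]; ring
  rw [hsupp, sum_sigmaIP_mul, hf', hg', chi_one]
  refine div_le_of_le_mul₀ (mul_nonneg (by positivity) (by linarith)) (by positivity) ?_
  rw [← hs2]
  field_simp
  nlinarith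

end sigmaIP

lemma one_div_two_rpow_half_sub_one (m : ℕ) :
    1 / (2 : ℝ) ^ ((m : ℝ) / 2 - 1) = 2 / √(2 ^ m) := by
  rw [Real.rpow_sub two_pos, Real.rpow_one, one_div_div, Real.sqrt_eq_rpow, ← Real.rpow_natCast,
    ← Real.rpow_mul zero_le_two, mul_one_div]

theorem stmt11_general (m : ℕ) (b : ZMod 2) :
    cor (sigmaIP m b) ≤ 1 / (2:ℝ) ^ ((m:ℝ)/2 - 1) := by
  rw [one_div_two_rpow_half_sub_one]
  refine Real.sSup_le ?_ (by positivity)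
  rintro _ ⟨f, g, hf, hg, hf2, hg2, rfl⟩
  rw [margSnd_sigmaIP] at hg hg2
  obtain ⟨hf, hf2⟩ := moments_of_expect_margFst_sigmaIP hf hf2
  obtain ⟨hg, hg2⟩ := moments_of_expect_margFst_sigmaIP hg hg2
  rcases zmod2_eq_zero_or_eq_one b with rfl | rfl
  · simp only [AddChar.map_zero_eq_one, one_mul] at hf hf2 hg hg2
    exact sum_sigmaIP_zero_mul_le hf hf2 hg hg2
  · simp only [chi_one, neg_one_mul, ← sub_eq_add_neg] at hf hf2 hg hg2
    exact sum_sigmaIP_one_mul_le hf hf2 hg hg2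

theorem stmt11 (m : ℕ) (hm : 2 ≤ m) (b : ZMod 2) :
    cor (sigmaIP m b) ≤ 1 / (2:ℝ) ^ ((m:ℝ)/2 - 1) :=
  stmt11_general m b

end SR
end

section
/- Let 1 < q < ∞, let 1 ≤ p ≤ q, let q' = q/(q−1), and let c be defined by 1/c = 1/p + 1/q'. Let ρ be a bipartite distribution on U × V that is q-to-p hypercontractive. Then for every z ∈ [0,1], agr_ρ(z) ≥ (p^{1/p} · q'^{1/q'} · z)^c / c. -/
open scoped BigOperators ENNReal

namespace SR

variable {U V X Y : Type*}

/-!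
Hypercontractivity tensorizes: fibrewise, the `q`-norm of `T_{ρ⊗σ} F` is bounded through that of
`T_ρ` and then that of `T_σ`, the two steps being glued by Minkowski's inequality for mixed norms,
`‖‖H‖_{L^p(du)}‖_{L^q(dy)} ≤ ‖‖H‖_{L^q(dy)}‖_{L^p(du)}`, valid since `p ≤ q`. Hence `ρ^⊗ℓ` is
`q`-to-`p` hypercontractive. For a protocol `(f, g)` with costs `a = E f`, `b = E g`, Hölder,
hypercontractivity and `0 ≤ f, g ≤ 1` give
`E[f g] = E[T f · g] ≤ ‖T f‖_q ‖g‖_{q'} ≤ ‖f‖_p ‖g‖_{q'} ≤ a^{1/p} b^{1/q'}`,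
and weighted AM-GM with weights `c/p + c/q' = 1` turns this into
`(p^{1/p} q'^{1/q'} z)^c ≤ (p a)^{c/p} (q' b)^{c/q'} ≤ c (a + b)`.
-/

lemma rpow_one_div_rpow_eq {S r : ℝ} (hS : 0 ≤ S) (hr : r ≠ 0) : (S ^ (1 / r)) ^ r = S := by
  rw [one_div, Real.rpow_inv_rpow hS hr]

lemma mul_rpow_one_div_rpow {m x r : ℝ} (hm : 0 ≤ m) (hx : 0 ≤ x) (hr : r ≠ 0) :
    (m ^ (1 / r) * x) ^ r = m * x ^ r := by
  rw [Real.mul_rpow (Real.rpow_nonneg hm _) hx, rpow_one_div_rpow_eq hm hr]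

noncomputable def wnorm {β : Type*} [Fintype β] (μ : β → ℝ) (r : ℝ) (h : β → ℝ) : ℝ :=
  (∑ b, μ b * h b ^ r) ^ (1 / r)

section WeightedNorm

variable {α β : Type*} [Fintype α] [Fintype β]

lemma wnorm_nonneg (μ : β → ℝ) (r : ℝ) (h : β → ℝ) (hμ : 0 ≤ μ) (hh : 0 ≤ h) :
    0 ≤ wnorm μ r h :=
  Real.rpow_nonneg (Finset.sum_nonneg fun b _ => mul_nonneg (hμ b) (Real.rpow_nonneg (hh b) r)) _

lemma wnorm_rpow {μ h : β → ℝ} (hμ : 0 ≤ μ) (hh : 0 ≤ h) {r s : ℝ} (hr : 0 < r) (hs : 0 < s) :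
    wnorm μ r (fun b => h b ^ s) = wnorm μ (s * r) h ^ s := by
  have hS : 0 ≤ ∑ b, μ b * h b ^ (s * r) :=
    Finset.sum_nonneg fun b _ => mul_nonneg (hμ b) (Real.rpow_nonneg (hh b) _)
  simp only [wnorm, ← Real.rpow_mul (hh _), ← Real.rpow_mul hS]
  congr 1
  field_simp

lemma wnorm_mono {μ h h' : β → ℝ} (hμ : 0 ≤ μ) (hh : 0 ≤ h) (hle : h ≤ h') {r : ℝ} (hr : 0 < r) :
    wnorm μ r h ≤ wnorm μ r h' := by
  unfold wnorm
  gcongr with b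
  · exact Finset.sum_nonneg fun b _ => mul_nonneg (hμ b) (Real.rpow_nonneg (hh b) r)
  · exact hμ b
  · exact hh b
  · exact hle b

lemma wnorm_eq_norm_toLp {μ h : β → ℝ} (hμ : 0 ≤ μ) (hh : 0 ≤ h) {r : ℝ} (hr : 0 < r) :
    wnorm μ r h = ‖WithLp.toLp (ENNReal.ofReal r) (fun b => μ b ^ (1 / r) * h b)‖ := by
  rw [PiLp.norm_eq_sum (by rwa [ENNReal.toReal_ofReal hr.le]), ENNReal.toReal_ofReal hr.le, wnorm]
  congr 1
  refine Finset.sum_congr rfl fun b _ => ?_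
  rw [PiLp.toLp_apply, Real.norm_of_nonneg (mul_nonneg (Real.rpow_nonneg (hμ b) _) (hh b)),
    mul_rpow_one_div_rpow (hμ b) (hh b) hr.ne']

lemma wnorm_sum_le {ι : Type*} {μ : β → ℝ} (hμ : 0 ≤ μ) {r : ℝ} (hr : 1 ≤ r) (s : Finset ι)
    {c : ι → ℝ} (hc : 0 ≤ c) {h : ι → β → ℝ} (hh : ∀ i, 0 ≤ h i) :
    wnorm μ r (fun b => ∑ i ∈ s, c i * h i b) ≤ ∑ i ∈ s, c i * wnorm μ r (h i) := by
  have hr0 : 0 < r := zero_lt_one.trans_le hr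
  have : Fact (1 ≤ ENNReal.ofReal r) := ⟨by simpa using hr⟩
  rw [wnorm_eq_norm_toLp hμ (fun b => Finset.sum_nonneg fun i _ => mul_nonneg (hc i) (hh i b)) hr0]
  have hsum : WithLp.toLp (ENNReal.ofReal r) (fun b => μ b ^ (1 / r) * ∑ i ∈ s, c i * h i b) =
      ∑ i ∈ s, c i • WithLp.toLp (ENNReal.ofReal r) (fun b => μ b ^ (1 / r) * h i b) := by
    ext b
    simp [Finset.mul_sum, mul_left_comm]
  rw [hsum]
  refine (norm_sum_le _ _).trans (Finset.sum_le_sum fun i _ => ?_)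
  rw [norm_smul, Real.norm_of_nonneg (hc i), wnorm_eq_norm_toLp hμ (hh i) hr0]

lemma wnorm_prod_fst {μ : α → ℝ} {ν : β → ℝ} (hμ : 0 ≤ μ) {H : α × β → ℝ} (hH : 0 ≤ H)
    {r : ℝ} (hr : r ≠ 0) :
    wnorm (fun x => μ x.1 * ν x.2) r H = wnorm ν r (fun b => wnorm μ r (fun a => H (a, b))) := by
  unfold wnorm
  congr 1
  rw [Fintype.sum_prod_type_right]
  refine Finset.sum_congr rfl fun b _ => ?_
  rw [rpow_one_div_rpow_eq (Finset.sum_nonneg fun a _ => mul_nonneg (hμ a)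
    (Real.rpow_nonneg (hH _) r)) hr, Finset.mul_sum]
  exact Finset.sum_congr rfl fun a _ => by ring

lemma wnorm_prod_snd {μ : α → ℝ} {ν : β → ℝ} (hν : 0 ≤ ν) {H : α × β → ℝ} (hH : 0 ≤ H)
    {r : ℝ} (hr : r ≠ 0) :
    wnorm (fun x => μ x.1 * ν x.2) r H = wnorm μ r (fun a => wnorm ν r (fun b => H (a, b))) := by
  unfold wnorm
  congr 1
  rw [Fintype.sum_prod_type]
  refine Finset.sum_congr rfl fun a _ => ?_
  rw [rpow_one_div_rpow_eq (Finset.sum_nonneg fun b _ => mul_nonneg (hν b)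
    (Real.rpow_nonneg (hH _) r)) hr, Finset.mul_sum]
  exact Finset.sum_congr rfl fun b _ => by ring

lemma wnorm_wnorm_le {μ : α → ℝ} {ν : β → ℝ} (hμ : 0 ≤ μ) (hν : 0 ≤ ν) {H : α → β → ℝ}
    (hH : ∀ a, 0 ≤ H a) {p q : ℝ} (hp : 0 < p) (hpq : p ≤ q) :
    wnorm ν q (fun b => wnorm μ p (fun a => H a b)) ≤
      wnorm μ p (fun a => wnorm ν q (H a)) := by
  have hq : 0 < q := hp.trans_le hpq
  have hr : 1 ≤ q / p := (one_le_div hp).mpr hpq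
  have hS : 0 ≤ fun b => ∑ a, μ a * H a b ^ p :=
    fun b => Finset.sum_nonneg fun a _ => mul_nonneg (hμ a) (Real.rpow_nonneg (hH a b) p)
  have key : wnorm ν (q / p) (fun b => ∑ a, μ a * H a b ^ p) ≤ ∑ a, μ a * wnorm ν q (H a) ^ p := by
    refine (wnorm_sum_le hν hr _ hμ fun a b => Real.rpow_nonneg (hH a b) p).trans_eq ?_
    refine Finset.sum_congr rfl fun a _ => ?_
    rw [wnorm_rpow hν (hH a) (by positivity) hp, mul_div_cancel₀ q hp.ne']
  calc wnorm ν q (fun b => wnorm μ p (fun a => H a b))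
      = wnorm ν (q / p) (fun b => ∑ a, μ a * H a b ^ p) ^ (1 / p) := by
        rw [show q / p = 1 / p * q by ring, ← wnorm_rpow hν hS hq (by positivity)]
        rfl
    _ ≤ wnorm μ p (fun a => wnorm ν q (H a)) :=
        Real.rpow_le_rpow (wnorm_nonneg _ _ _ hν hS) key (by positivity)

lemma sum_mul_mul_le_wnorm_mul_wnorm {μ x y : β → ℝ} (hμ : 0 ≤ μ) (hx : 0 ≤ x) (hy : 0 ≤ y)
    {q q' : ℝ} (hqq : q.HolderConjugate q') :
    ∑ b, μ b * (x b * y b) ≤ wnorm μ q x * wnorm μ q' y := by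
  have hμ' : ∀ b, μ b ^ (1 / q) * μ b ^ (1 / q') = μ b := fun b => by
    rw [← Real.rpow_add' (hμ b) (by simp [hqq.inv_add_inv_eq_one]), one_div, one_div,
      hqq.inv_add_inv_eq_one, Real.rpow_one]
  have := Real.inner_le_Lp_mul_Lq_of_nonneg Finset.univ hqq
    (f := fun b => μ b ^ (1 / q) * x b) (g := fun b => μ b ^ (1 / q') * y b)
    (fun b _ => mul_nonneg (Real.rpow_nonneg (hμ b) _) (hx b))
    (fun b _ => mul_nonneg (Real.rpow_nonneg (hμ b) _) (hy b))
  simp only [mul_rpow_one_div_rpow (hμ _) (hx _) hqq.ne_zero,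
    mul_rpow_one_div_rpow (hμ _) (hy _) hqq.symm.ne_zero] at this
  refine le_of_eq_of_le (Finset.sum_congr rfl fun b _ => ?_) this
  linear_combination (-(x b * y b)) * hμ' b

lemma wnorm_le_of_mem_Icc {μ h : β → ℝ} (hμ : 0 ≤ μ) (hh : ∀ b, h b ∈ Set.Icc (0 : ℝ) 1)
    {r : ℝ} (hr : 1 ≤ r) : wnorm μ r h ≤ (∑ b, μ b * h b) ^ (1 / r) := by
  unfold wnorm
  gcongr with b
  · exact Finset.sum_nonneg fun b _ => mul_nonneg (hμ b) (Real.rpow_nonneg (hh b).1 r)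
  · exact hμ b
  · exact Real.rpow_le_self_of_le_one (hh b).1 (hh b).2 hr

end WeightedNorm

section Hypercontractivity

variable {U V X Y : Type*} [Fintype U] [Fintype V] [Fintype X] [Fintype Y]

lemma lnorm_eq_wnorm (μ : U → ℝ) (r : ℝ) (h : U → ℂ) : lnorm μ r h = wnorm μ r (fun a => ‖h a‖) :=
  rfl

lemma lnorm_comp_equiv {U' : Type*} [Fintype U'] (e : U' ≃ U) (μ : U → ℝ) (r : ℝ) (h : U → ℂ) :
    lnorm (μ ∘ e) r (h ∘ e) = lnorm μ r h :=
  congrArg (· ^ (1 / r)) (e.sum_comp fun a => μ a * ‖h a‖ ^ r)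

omit [Fintype U] in
lemma margFst_nonneg {ρ : U × V → ℝ} (hρ : 0 ≤ ρ) : 0 ≤ margFst ρ :=
  fun _ => Finset.sum_nonneg fun _ _ => hρ _

omit [Fintype V] in
lemma margSnd_nonneg {ρ : U × V → ℝ} (hρ : 0 ≤ ρ) : 0 ≤ margSnd ρ :=
  fun _ => Finset.sum_nonneg fun _ _ => hρ _

omit [Fintype U] [Fintype X] in
lemma margFst_tensor (ρ : U × V → ℝ) (σ : X × Y → ℝ) :
    margFst (tensor ρ σ) = fun x => margFst ρ x.1 * margFst σ x.2 :=
  funext fun _ => by simp only [margFst, tensor, Fintype.sum_prod_type, Finset.sum_mul_sum]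

omit [Fintype V] [Fintype Y] in
lemma margSnd_tensor (ρ : U × V → ℝ) (σ : X × Y → ℝ) :
    margSnd (tensor ρ σ) = fun y => margSnd ρ y.1 * margSnd σ y.2 :=
  funext fun _ => by simp only [margSnd, tensor, Fintype.sum_prod_type, Finset.sum_mul_sum]

lemma condOp_tensor (ρ : U × V → ℝ) (σ : X × Y → ℝ) (F : U × X → ℂ) (v : V) (y : Y) :
    condOp (tensor ρ σ) F (v, y) = condOp ρ (fun u => condOp σ (fun x => F (u, x)) y) v := by
  simp only [condOp, margSnd_tensor, Fintype.sum_prod_type, Finset.mul_sum, tensor]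
  refine Finset.sum_congr rfl fun u _ => Finset.sum_congr rfl fun x _ => ?_
  push_cast
  ring

lemma hyper_tensor {ρ : U × V → ℝ} {σ : X × Y → ℝ} (hρ : 0 ≤ ρ) (hσ : 0 ≤ σ) {p q : ℝ}
    (hp : 0 < p) (hpq : p ≤ q) (Hρ : Hyper ρ q p) (Hσ : Hyper σ q p) :
    Hyper (tensor ρ σ) q p := by
  intro F
  have hq : 0 < q := hp.trans_le hpq
  let G : Y → U → ℂ := fun y u => condOp σ (fun x => F (u, x)) y
  calc lnorm (margSnd (tensor ρ σ)) q (condOp (tensor ρ σ) F)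
      = wnorm (margSnd σ) q (fun y => lnorm (margSnd ρ) q (condOp ρ (G y))) := by
        rw [lnorm_eq_wnorm, margSnd_tensor,
          wnorm_prod_fst (margSnd_nonneg hρ) (fun _ => norm_nonneg _) hq.ne']
        simp only [condOp_tensor]
        rfl
    _ ≤ wnorm (margSnd σ) q (fun y => lnorm (margFst ρ) p (G y)) :=
        wnorm_mono (margSnd_nonneg hσ) (fun _ => wnorm_nonneg _ _ _ (margSnd_nonneg hρ)
          fun _ => norm_nonneg _) (fun y => Hρ (G y)) hq
    _ ≤ wnorm (margFst ρ) p (fun u => lnorm (margSnd σ) q (fun y => G y u)) :=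
        wnorm_wnorm_le (margFst_nonneg hρ) (margSnd_nonneg hσ) (fun _ _ => norm_nonneg _) hp hpq
    _ ≤ wnorm (margFst ρ) p (fun u => lnorm (margFst σ) p (fun x => F (u, x))) :=
        wnorm_mono (margFst_nonneg hρ) (fun _ => wnorm_nonneg _ _ _ (margSnd_nonneg hσ)
          fun _ => norm_nonneg _) (fun u => Hσ _) hp
    _ = lnorm (margFst (tensor ρ σ)) p F := by
        rw [lnorm_eq_wnorm, margFst_tensor,
          wnorm_prod_snd (margFst_nonneg hσ) (fun _ => norm_nonneg _) hp.ne']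
        rfl

lemma hyper_comp_equiv {U' V' : Type*} [Fintype U'] [Fintype V'] (eU : U' ≃ U) (eV : V' ≃ V)
    {ρ : U × V → ℝ} {q p : ℝ} (H : Hyper ρ q p) :
    Hyper (fun x : U' × V' => ρ (eU x.1, eV x.2)) q p := by
  intro f
  have hfst : margFst (fun x : U' × V' => ρ (eU x.1, eV x.2)) = margFst ρ ∘ eU :=
    funext fun u => eV.sum_comp fun v => ρ (eU u, v)
  have hsnd : margSnd (fun x : U' × V' => ρ (eU x.1, eV x.2)) = margSnd ρ ∘ eV :=
    funext fun v => eU.sum_comp fun u => ρ (u, eV v)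
  have hcond : condOp (fun x : U' × V' => ρ (eU x.1, eV x.2)) f = condOp ρ (f ∘ eU.symm) ∘ eV :=
    funext fun v => by
      simp only [condOp, hsnd, Function.comp_apply]
      rw [← eU.sum_comp]
      simp
  rw [hfst, hsnd, hcond]
  calc lnorm (margSnd ρ ∘ eV) q (condOp ρ (f ∘ eU.symm) ∘ eV)
      = lnorm (margSnd ρ) q (condOp ρ (f ∘ eU.symm)) := lnorm_comp_equiv _ _ _ _
    _ ≤ lnorm (margFst ρ) p (f ∘ eU.symm) := H _
    _ = lnorm (margFst ρ ∘ eU) p f := by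
        rw [← lnorm_comp_equiv eU]
        simp [Function.comp_def]

lemma hyper_of_unique [Unique U] [Unique V] {ρ : U × V → ℝ} (hρ : ρ default = 1) {q p : ℝ}
    (hq : q ≠ 0) (hp : p ≠ 0) : Hyper ρ q p := by
  intro f
  have h1 : ρ (default, default) = 1 := hρ
  simp [lnorm, condOp, margFst, margSnd, h1, hp, hq]

omit [Fintype U] [Fintype V] in
lemma iid_nonneg {ρ : U × V → ℝ} (hρ : 0 ≤ ρ) (ℓ : ℕ) : 0 ≤ iid ρ ℓ :=
  fun _ => Finset.prod_nonneg fun _ _ => hρ _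

omit [Fintype U] [Fintype V] in
lemma iid_succ_s15 (ρ : U × V → ℝ) (ℓ : ℕ) :
    iid ρ (ℓ + 1) = fun x => tensor ρ (iid ρ ℓ)
      ((Fin.consEquiv fun _ => U).symm x.1, (Fin.consEquiv fun _ => V).symm x.2) := by
  funext x
  simp [iid, tensor, Fin.prod_univ_succ, Fin.tail]

lemma hyper_iid {ρ : U × V → ℝ} (hρ : 0 ≤ ρ) {p q : ℝ} (hp : 0 < p) (hpq : p ≤ q)
    (H : Hyper ρ q p) (ℓ : ℕ) : Hyper (iid ρ ℓ) q p := by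
  induction ℓ with
  | zero => exact hyper_of_unique Finset.prod_empty (hp.trans_le hpq).ne' hp.ne'
  | succ ℓ ih =>
    rw [iid_succ_s15]
    exact hyper_comp_equiv _ _ (hyper_tensor hρ (iid_nonneg hρ ℓ) hp hpq H ih)

end Hypercontractivity

section Agreement

variable {A B : Type*} [Fintype A] [Fintype B]

lemma lnorm_ofReal (μ : A → ℝ) (r : ℝ) {f : A → ℝ} (hf : 0 ≤ f) :
    lnorm μ r (fun a => (f a : ℂ)) = wnorm μ r f := by
  simp only [lnorm_eq_wnorm, Complex.norm_real, Real.norm_of_nonneg (hf _)]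

lemma margSnd_mul_norm_condOp {σ : A × B → ℝ} (hσ : 0 ≤ σ) {f : A → ℝ} (hf : 0 ≤ f) (b : B) :
    margSnd σ b * ‖condOp σ (fun a => (f a : ℂ)) b‖ = ∑ a, σ (a, b) * f a := by
  have hT : condOp σ (fun a => (f a : ℂ)) b = ((∑ a, σ (a, b) / margSnd σ b * f a : ℝ) : ℂ) := by
    simp [condOp]
  rw [hT, Complex.norm_real, Real.norm_of_nonneg (Finset.sum_nonneg fun a _ =>
    mul_nonneg (div_nonneg (hσ _) (margSnd_nonneg hσ b)) (hf a)), Finset.mul_sum]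
  by_cases hb : margSnd σ b = 0
  · have hzero := (Finset.sum_eq_zero_iff_of_nonneg fun a _ => hσ (a, b)).mp hb
    simp [hb, hzero]
  · exact Finset.sum_congr rfl fun a _ => by field_simp

lemma sum_mul_fst (σ : A × B → ℝ) (f : A → ℝ) :
    ∑ x, σ x * f x.1 = ∑ a, margFst σ a * f a := by
  simp only [Fintype.sum_prod_type, margFst, Finset.sum_mul]

lemma sum_mul_snd (σ : A × B → ℝ) (g : B → ℝ) :
    ∑ x, σ x * g x.2 = ∑ b, margSnd σ b * g b := by
  simp only [Fintype.sum_prod_type_right, margSnd, Finset.sum_mul]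

lemma sum_mul_mul_le_of_hyper {σ : A × B → ℝ} (hσ : 0 ≤ σ) {p q q' : ℝ} (hp : 1 ≤ p)
    (hqq : q.HolderConjugate q') (H : Hyper σ q p) {f : A → ℝ} {g : B → ℝ}
    (hf : ∀ a, f a ∈ Set.Icc (0 : ℝ) 1) (hg : ∀ b, g b ∈ Set.Icc (0 : ℝ) 1) :
    ∑ x, σ x * (f x.1 * g x.2) ≤
      (∑ x, σ x * f x.1) ^ (1 / p) * (∑ x, σ x * g x.2) ^ (1 / q') := by
  have hf0 : 0 ≤ f := fun a => (hf a).1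
  have hg0 : 0 ≤ g := fun b => (hg b).1
  have hμA := margFst_nonneg hσ
  have hμB := margSnd_nonneg hσ
  calc ∑ x, σ x * (f x.1 * g x.2)
      = ∑ b, margSnd σ b * (‖condOp σ (fun a => (f a : ℂ)) b‖ * g b) := by
        rw [Fintype.sum_prod_type_right]
        refine Finset.sum_congr rfl fun b _ => ?_
        rw [← mul_assoc, margSnd_mul_norm_condOp hσ hf0, Finset.sum_mul]
        exact Finset.sum_congr rfl fun a _ => by ring
    _ ≤ lnorm (margSnd σ) q (condOp σ fun a => (f a : ℂ)) * wnorm (margSnd σ) q' g :=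
        sum_mul_mul_le_wnorm_mul_wnorm hμB (fun _ => norm_nonneg _) hg0 hqq
    _ ≤ wnorm (margFst σ) p f * wnorm (margSnd σ) q' g := by
        rw [← lnorm_ofReal _ _ hf0]
        exact mul_le_mul_of_nonneg_right (H _) (wnorm_nonneg _ _ _ hμB hg0)
    _ ≤ (∑ x, σ x * f x.1) ^ (1 / p) * (∑ x, σ x * g x.2) ^ (1 / q') := by
        rw [sum_mul_fst, sum_mul_snd]
        exact mul_le_mul (wnorm_le_of_mem_Icc hμA hf hp)
          (wnorm_le_of_mem_Icc hμB hg hqq.symm.lt.le) (wnorm_nonneg _ _ _ hμB hg0)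
          (Real.rpow_nonneg (Finset.sum_nonneg fun a _ => mul_nonneg (hμA a) (hf0 a)) _)

end Agreement

lemma rpow_scaled_geom_mean_le_mul_add {p q' c a b : ℝ} (hp : 0 < p) (hq' : 0 < q')
    (hc : 1 / c = 1 / p + 1 / q') (ha : 0 ≤ a) (hb : 0 ≤ b) :
    (p ^ (1 / p) * q' ^ (1 / q') * (a ^ (1 / p) * b ^ (1 / q'))) ^ c ≤ c * (a + b) := by
  have hc0 : 0 < c := one_div_pos.mp (hc ▸ by positivity)
  have hpa : 0 ≤ p * a := mul_nonneg hp.le ha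
  have hqb : 0 ≤ q' * b := mul_nonneg hq'.le hb
  have hw : c / p + c / q' = 1 := by
    rw [div_eq_mul_one_div c p, div_eq_mul_one_div c q', ← mul_add, ← hc, mul_one_div_cancel hc0.ne']
  calc (p ^ (1 / p) * q' ^ (1 / q') * (a ^ (1 / p) * b ^ (1 / q'))) ^ c
      = ((p * a) ^ (1 / p) * (q' * b) ^ (1 / q')) ^ c := by
        rw [Real.mul_rpow hp.le ha, Real.mul_rpow hq'.le hb]
        ring_nf
    _ = (p * a) ^ (c / p) * (q' * b) ^ (c / q') := by
        rw [Real.mul_rpow (by positivity) (by positivity), ← Real.rpow_mul hpa,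
          ← Real.rpow_mul hqb, one_div_mul_eq_div, one_div_mul_eq_div]
    _ ≤ c / p * (p * a) + c / q' * (q' * b) :=
        Real.geom_mean_le_arith_mean2_weighted (by positivity) (by positivity) hpa hqb hw
    _ = c * (a + b) := by field_simp

-- `agr` is an `sInf` over reals (`sInf ∅ = 0`); the constant protocol `f = g = 1`, admissible
-- since `z ≤ 1`, keeps the set nonempty.
lemma le_agr {U V : Type*} [Fintype U] [Fintype V] {ρ : U × V → ℝ} {z M : ℝ} (hz : z ≤ 1)
    (h : ∀ (ℓ : ℕ) (f : (Fin ℓ → U) → ℝ) (g : (Fin ℓ → V) → ℝ),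
      (∀ x, f x ∈ Set.Icc (0 : ℝ) 1) → (∀ y, g y ∈ Set.Icc (0 : ℝ) 1) →
      z ≤ ∑ x, iid ρ ℓ x * (f x.1 * g x.2) →
      M ≤ (∑ x, iid ρ ℓ x * f x.1) + ∑ x, iid ρ ℓ x * g x.2) :
    M ≤ agr ρ z := by
  refine le_csInf ⟨2, 0, fun _ => 1, fun _ => 1, fun _ => ⟨zero_le_one, le_rfl⟩,
    fun _ => ⟨zero_le_one, le_rfl⟩, ?_, ?_⟩ ?_
  · simpa [iid] using hz
  · norm_num [iid]
  · rintro _ ⟨ℓ, f, g, hf, hg, hsucc, rfl⟩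
    exact h ℓ f g hf hg hsucc

theorem stmt15_general {U V : Type} [Fintype U] [Fintype V]
    (q p : ℝ) (hq : 1 < q) (hp : 1 ≤ p) (hpq : p ≤ q)
    (q' c : ℝ) (hq' : q' = q / (q - 1)) (hc : 1 / c = 1 / p + 1 / q')
    (ρ : U × V → ℝ) (hρ : IsDist ρ) (hhyp : Hyper ρ q p)
    (z : ℝ) (hz : z ∈ Set.Icc (0:ℝ) 1) :
    (p ^ (1/p) * q' ^ (1/q') * z) ^ c / c ≤ agr ρ z := by
  have hqq : q.HolderConjugate q' := hq' ▸ Real.HolderConjugate.conjExponent hq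
  have hp0 : 0 < p := zero_lt_one.trans_le hp
  have hc0 : 0 < c := one_div_pos.mp (hc ▸ by positivity [hqq.symm.pos])
  refine le_agr hz.2 fun ℓ f g hf hg hsucc => ?_
  have hσ := iid_nonneg hρ.1 ℓ
  have hbound := sum_mul_mul_le_of_hyper hσ hp hqq (hyper_iid hρ.1 hp0 hpq hhyp ℓ) hf hg
  rw [div_le_iff₀' hc0]
  calc (p ^ (1/p) * q' ^ (1/q') * z) ^ c
      ≤ (p ^ (1/p) * q' ^ (1/q') * ((∑ x, iid ρ ℓ x * f x.1) ^ (1 / p) *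
          (∑ x, iid ρ ℓ x * g x.2) ^ (1 / q'))) ^ c := by
        have hK : 0 ≤ p ^ (1/p) * q' ^ (1/q') := by positivity [hqq.symm.pos]
        gcongr
        · exact mul_nonneg hK hz.1
        · exact hsucc.trans hbound
    _ ≤ c * ((∑ x, iid ρ ℓ x * f x.1) + ∑ x, iid ρ ℓ x * g x.2) :=
        rpow_scaled_geom_mean_le_mul_add hp0 hqq.symm.pos hc
          (Finset.sum_nonneg fun x _ => mul_nonneg (hσ x) (hf x.1).1)
          (Finset.sum_nonneg fun x _ => mul_nonneg (hσ x) (hg x.2).1)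

theorem stmt15 {U V : Type} [Fintype U] [Fintype V] [Nonempty U] [Nonempty V]
    (q p : ℝ) (hq : 1 < q) (hp : 1 ≤ p) (hpq : p ≤ q)
    (q' c : ℝ) (hq' : q' = q / (q - 1)) (hc : 1 / c = 1 / p + 1 / q')
    (ρ : U × V → ℝ) (hρ : IsDist ρ) (hhyp : Hyper ρ q p)
    (z : ℝ) (hz : z ∈ Set.Icc (0:ℝ) 1) :
    (p ^ (1/p) * q' ^ (1/q') * z) ^ c / c ≤ agr ρ z :=
  stmt15_general q p hq hp hpq q' c hq' hc ρ hρ hhyp z hz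

end SR
end

section
/- The bipartite distribution ρ_disj (uniform on {(0,0),(0,1),(1,0)} ⊆ {0,1} × {0,1}) is 3-to-3/2 hypercontractive. Concretely, for every function f : {0,1} → ℂ, ((2/3)·|(f(0)+f(1))/2|³ + (1/3)·|f(0)|³)^{1/3} ≤ ((2/3)·|f(0)|^{3/2} + (1/3)·|f(1)|^{3/2})^{2/3}. Equivalently, for all real numbers α, β ≥ 0: ((2/3)·α^{3/2} + (1/3)·β^{3/2})² − (2/3)·((α+β)/2)³ − (1/3)·α³ = (√α − √β)⁴·(α + 4√(αβ) + β)/36 ≥ 0. -/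
open scoped BigOperators ENNReal

namespace SR

variable {U V X Y : Type*}

/-!
Under `ρ_disj` the operator `T` sends `f` to the function taking the value `(f 0 + f 1)/2` with
probability `2/3` and `f 0` with probability `1/3`, while `f` itself has `ρ_U`-weights `2/3, 1/3`.
By the triangle inequality it suffices to treat `α = |f 0|`, `β = |f 1|` and to compare the cubes
of both norms. Writing `α = a²`, `β = b²`, the difference of the cubes is the polynomial identity
`((2a³ + b³)/3)² - (2/3)((a² + b²)/2)³ - a⁶/3 = (a - b)⁴ (a² + 4ab + b²)/36`, which is
manifestly nonnegative for `a, b ≥ 0`.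
-/

lemma sq_mix_cube_sub_eq (a b : ℝ) :
    ((2/3) * a ^ 3 + (1/3) * b ^ 3) ^ 2 - (2/3) * ((a ^ 2 + b ^ 2) / 2) ^ 3 - (1/3) * (a ^ 2) ^ 3
      = (a - b) ^ 4 * (a ^ 2 + 4 * (a * b) + b ^ 2) / 36 := by
  ring

lemma disj_gap_eq {α β : ℝ} (hα : 0 ≤ α) (hβ : 0 ≤ β) :
    ((2/3) * α ^ ((3:ℝ)/2) + (1/3) * β ^ ((3:ℝ)/2)) ^ 2
        - (2/3) * ((α + β)/2) ^ 3 - (1/3) * α ^ 3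
      = (Real.sqrt α - Real.sqrt β) ^ 4 * (α + 4 * Real.sqrt (α * β) + β) / 36 := by
  have key := sq_mix_cube_sub_eq (Real.sqrt α) (Real.sqrt β)
  rw [Real.sq_sqrt hα, Real.sq_sqrt hβ, ← Real.sqrt_mul hα] at key
  rwa [Real.rpow_div_two_eq_sqrt _ hα, Real.rpow_div_two_eq_sqrt _ hβ, Real.rpow_ofNat,
    Real.rpow_ofNat]

lemma disj_gap_nonneg {α β : ℝ} (hα : 0 ≤ α) (hβ : 0 ≤ β) :
    0 ≤ (Real.sqrt α - Real.sqrt β) ^ 4 * (α + 4 * Real.sqrt (α * β) + β) / 36 := by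
  positivity

lemma rpow_one_div_le_of_le_rpow {x y p q : ℝ} (hx : 0 ≤ x) (hy : 0 ≤ y) (hq : 0 < q)
    (h : x ≤ y ^ (q / p)) : x ^ (1 / q) ≤ y ^ (1 / p) :=
  calc x ^ (1 / q) ≤ (y ^ (q / p)) ^ (1 / q) := Real.rpow_le_rpow hx h (by positivity)
    _ = y ^ (1 / p) := by rw [← Real.rpow_mul hy]; congr 1; field_simp

lemma disj_ineq {α β M : ℝ} (hα : 0 ≤ α) (hβ : 0 ≤ β) (hM : 0 ≤ M) (hMle : M ≤ (α + β) / 2) :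
    ((2/3) * M ^ (3:ℝ) + (1/3) * α ^ (3:ℝ)) ^ ((1:ℝ)/3)
      ≤ ((2/3) * α ^ ((3:ℝ)/2) + (1/3) * β ^ ((3:ℝ)/2)) ^ ((2:ℝ)/3) := by
  rw [show ((2:ℝ)/3) = 1 / (3/2) by norm_num]
  apply rpow_one_div_le_of_le_rpow (by positivity) (by positivity) (by norm_num)
  have hcube : M ^ 3 ≤ ((α + β) / 2) ^ 3 := pow_le_pow_left₀ hM hMle 3
  rw [show (3:ℝ) / (3/2) = 2 by norm_num, Real.rpow_ofNat, Real.rpow_ofNat, Real.rpow_ofNat]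
  linarith [disj_gap_eq hα hβ, disj_gap_nonneg hα hβ]

lemma disj_norm_ineq (f : Bool → ℂ) :
    ((2/3) * ‖(f false + f true) / 2‖ ^ (3:ℝ)
        + (1/3) * ‖f false‖ ^ (3:ℝ)) ^ ((1:ℝ)/3)
      ≤ ((2/3) * ‖f false‖ ^ ((3:ℝ)/2)
        + (1/3) * ‖f true‖ ^ ((3:ℝ)/2)) ^ ((2:ℝ)/3) := by
  refine disj_ineq (norm_nonneg _) (norm_nonneg _) (norm_nonneg _) ?_
  rw [norm_div, Complex.norm_two]
  linarith [norm_add_le (f false) (f true)]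

lemma lnorm_condOp_rhoDisj (f : Bool → ℂ) :
    lnorm (margSnd rhoDisj) 3 (condOp rhoDisj f)
      = ((2/3) * ‖(f false + f true) / 2‖ ^ (3:ℝ) + (1/3) * ‖f false‖ ^ (3:ℝ)) ^ ((1:ℝ)/3) := by
  have hT : (1/2 : ℂ) * f true + 1/2 * f false = (f false + f true) / 2 := by ring
  simp only [lnorm, condOp, margSnd, rhoDisj, Fintype.sum_bool]
  norm_num [hT, add_comm]

lemma lnorm_margFst_rhoDisj (f : Bool → ℂ) :
    lnorm (margFst rhoDisj) (3/2) f
      = ((2/3) * ‖f false‖ ^ ((3:ℝ)/2) + (1/3) * ‖f true‖ ^ ((3:ℝ)/2)) ^ ((2:ℝ)/3) := by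
  simp only [lnorm, margFst, rhoDisj, Fintype.sum_bool]
  norm_num [add_comm]

theorem rhoDisj_hyper : Hyper rhoDisj 3 (3/2) := fun f => by
  rw [lnorm_condOp_rhoDisj, lnorm_margFst_rhoDisj]
  exact disj_norm_ineq f

theorem stmt17 :
    Hyper rhoDisj 3 (3/2)
    ∧ (∀ f : Bool → ℂ,
        ((2/3) * ‖(f false + f true) / 2‖ ^ (3:ℝ)
            + (1/3) * ‖f false‖ ^ (3:ℝ)) ^ ((1:ℝ)/3)
          ≤ ((2/3) * ‖f false‖ ^ ((3:ℝ)/2)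
            + (1/3) * ‖f true‖ ^ ((3:ℝ)/2)) ^ ((2:ℝ)/3))
    ∧ (∀ α β : ℝ, 0 ≤ α → 0 ≤ β →
        ((2/3) * α ^ ((3:ℝ)/2) + (1/3) * β ^ ((3:ℝ)/2)) ^ 2
            - (2/3) * ((α + β)/2) ^ 3 - (1/3) * α ^ 3
          = (Real.sqrt α - Real.sqrt β) ^ 4 * (α + 4 * Real.sqrt (α * β) + β) / 36
        ∧ 0 ≤ (Real.sqrt α - Real.sqrt β) ^ 4 * (α + 4 * Real.sqrt (α * β) + β) / 36) :=
  ⟨rhoDisj_hyper, disj_norm_ineq, fun _ _ hα hβ => ⟨disj_gap_eq hα hβ, disj_gap_nonneg hα hβ⟩⟩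

end SR
end
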